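/- Let G be a finite graph with symmetric edge weights and Ω a finite subset of vertices. The Dirichlet-to-Neumann operator Λ on δΩ satisfies the operator norm bounds ‖Λ‖_{2,2} ≤ 1 and ‖Λ‖_{∞,∞} ≤ 2; that is, for every φ : δΩ → ℝ, Σ_{x∈δΩ} (Λφ)(x)² m_x ≤ Σ_{x∈δΩ} φ(x)² m_x and sup_{x∈δΩ} |Λφ(x)| ≤ 2 sup_{x∈δΩ} |φ(x)|. -/

import Mathlib

open scoped Classical
open Finset

variable {V : Type*} [Fintype V]

/-- The vertex boundary δΩ of a finite set Ω of vertices. -/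
noncomputable def bdry (μ : V → V → ℝ) (Ω : Finset V) : Finset V :=
  Finset.univ.filter fun x => x ∉ Ω ∧ ∃ y ∈ Ω, 0 < μ x y

/-- Ω̄ = Ω ∪ δΩ. -/
noncomputable def clos (μ : V → V → ℝ) (Ω : Finset V) : Finset V :=
  Ω ∪ bdry μ Ω

/-- The vertex measure m on Ω̄. -/
noncomputable def vm (μ : V → V → ℝ) (Ω : Finset V) (x : V) : ℝ :=
  if x ∈ Ω then ∑ y, μ x y else ∑ y ∈ Ω, μ x y

/-- m(B) = Σ_{x ∈ B} m_x. -/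
noncomputable def msum (μ : V → V → ℝ) (Ω : Finset V) (B : Finset V) : ℝ :=
  ∑ x ∈ B, vm μ Ω x

/-- Sum over the edges e = {x,y} of E(Ω,Ω̄) of μ_{xy} · F x y (for symmetric F). -/
noncomputable def edgeSum (μ : V → V → ℝ) (Ω : Finset V) (F : V → V → ℝ) : ℝ :=
  (∑ x ∈ Ω, ∑ y ∈ Ω, μ x y * F x y) / 2 +
    ∑ x ∈ Ω, ∑ y ∈ bdry μ Ω, μ x y * F x y

/-- Dirichlet energy D_Ω(f). -/
noncomputable def dirichlet (μ : V → V → ℝ) (Ω : Finset V) (f : V → ℝ) : ℝ :=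
  edgeSum μ Ω fun x y => (f x - f y) ^ 2

/-- Dirichlet form D_Ω(f,g). -/
noncomputable def dform (μ : V → V → ℝ) (Ω : Finset V) (f g : V → ℝ) : ℝ :=
  edgeSum μ Ω fun x y => (f x - f y) * (g x - g y)

/-- μ(∂_Ω A): total weight of the edges of E(Ω,Ω̄) with exactly one endpoint in A. -/
noncomputable def cut (μ : V → V → ℝ) (Ω : Finset V) (A : Finset V) : ℝ :=
  edgeSum μ Ω fun x y => if (x ∈ A) ↔ (y ∈ A) then 0 else 1

/-- The graph Laplacian Δf(x) (used for x ∈ Ω). -/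
noncomputable def lap (μ : V → V → ℝ) (Ω : Finset V) (f : V → ℝ) (x : V) : ℝ :=
  (∑ y, μ x y * (f y - f x)) / vm μ Ω x

/-- The outward normal derivative ∂f/∂n(z) (used for z ∈ δΩ). -/
noncomputable def nderiv (μ : V → V → ℝ) (Ω : Finset V) (f : V → ℝ) (z : V) : ℝ :=
  (∑ x ∈ Ω, μ z x * (f z - f x)) / vm μ Ω z

/-- f is harmonic on Ω. -/
def IsHarmonic (μ : V → V → ℝ) (Ω : Finset V) (u : V → ℝ) : Prop :=
  ∀ x ∈ Ω, lap μ Ω u x = 0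

/-- Adjacency in the graph Ω̃ = (Ω̄, E(Ω,Ω̄)). -/
def tilAdj (μ : V → V → ℝ) (Ω : Finset V) (x y : V) : Prop :=
  0 < μ x y ∧ (x ∈ Ω ∨ y ∈ Ω)

/-- The graph Ω̃ is connected. -/
def TilConnected (μ : V → V → ℝ) (Ω : Finset V) : Prop :=
  ∀ x ∈ clos μ Ω, ∀ y ∈ clos μ Ω, Relation.ReflTransGen (tilAdj μ Ω) x y

/-- λ₁(Ω): the first nontrivial eigenvalue of the Dirichlet-to-Neumann operator,
characterized by its Rayleigh quotient. -/
noncomputable def lambda1 (μ : V → V → ℝ) (Ω : Finset V) : ℝ :=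
  sInf { r : ℝ | ∃ u : V → ℝ, IsHarmonic μ Ω u ∧
    (∑ x ∈ bdry μ Ω, u x ^ 2 * vm μ Ω x) = 1 ∧
    (∑ x ∈ bdry μ Ω, u x * vm μ Ω x) = 0 ∧
    r = dirichlet μ Ω u }

/-- The Escobar-type Cheeger constant h_E(Ω̃). -/
noncomputable def hE (μ : V → V → ℝ) (Ω : Finset V) : ℝ :=
  sInf { r : ℝ | ∃ A : Finset V, A ⊆ clos μ Ω ∧
    0 < msum μ Ω (A ∩ bdry μ Ω) ∧
    msum μ Ω (A ∩ bdry μ Ω) ≤ msum μ Ω (bdry μ Ω) / 2 ∧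
    r = cut μ Ω A / msum μ Ω (A ∩ bdry μ Ω) }

/-- The Jammes-type Cheeger constant h_J(Ω̃). -/
noncomputable def hJ (μ : V → V → ℝ) (Ω : Finset V) : ℝ :=
  sInf { r : ℝ | ∃ A : Finset V, A ⊆ clos μ Ω ∧
    (A ∩ bdry μ Ω).Nonempty ∧
    msum μ Ω A ≤ msum μ Ω (clos μ Ω) / 2 ∧
    r = cut μ Ω A / msum μ Ω (A ∩ bdry μ Ω) }

/-- The classical Cheeger constant h(Ω̃). -/
noncomputable def cheeger (μ : V → V → ℝ) (Ω : Finset V) : ℝ :=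
  sInf { r : ℝ | ∃ A : Finset V, A ⊆ clos μ Ω ∧ A.Nonempty ∧
    msum μ Ω A ≤ msum μ Ω (clos μ Ω) / 2 ∧
    r = cut μ Ω A / msum μ Ω A }

/-! The L² bound combines three inequalities. By Cauchy–Schwarz, `(Λu)(z)² m_z` is at most the
energy of the edges at the boundary vertex `z`; summed over `δΩ` this is at most the Dirichlet
energy `D(u)`; and by the Dirichlet principle `D(u)` is at most the energy of the function that
agrees with `u` on `δΩ` and vanishes on `Ω`, which is `Σ_{z ∈ δΩ} u(z)² m_z`.

The L^∞ bound follows from the maximum principle: a harmonic function attains its maximum over the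
`Ω̃`-component of a boundary vertex at a boundary vertex, so `|u| ≤ C` at every interior neighbour
of `δΩ`, and `Λu(z)` is a weighted average of differences `u z - u x` bounded by `2 C`. -/

variable {μ : V → V → ℝ} {Ω : Finset V}

lemma mem_bdry {x : V} : x ∈ bdry μ Ω ↔ x ∉ Ω ∧ ∃ y ∈ Ω, 0 < μ x y := by
  simp [bdry]

lemma notMem_bdry_of_mem {x : V} (hx : x ∈ Ω) : x ∉ bdry μ Ω :=
  fun h => (mem_bdry.1 h).1 hx

lemma vm_of_mem_bdry {z : V} (hz : z ∈ bdry μ Ω) : vm μ Ω z = ∑ x ∈ Ω, μ z x :=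
  if_neg (mem_bdry.1 hz).1

lemma vm_pos_of_mem_bdry (hnn : ∀ x y, 0 ≤ μ x y) {z : V} (hz : z ∈ bdry μ Ω) :
    0 < vm μ Ω z := by
  obtain ⟨-, y, hy, hzy⟩ := mem_bdry.1 hz
  rw [vm_of_mem_bdry hz]
  exact sum_pos' (fun x _ => hnn z x) ⟨y, hy, hzy⟩

lemma sum_univ_eq_sum_add_sum_bdry (hsym : ∀ x y, μ x y = μ y x) (hnn : ∀ x y, 0 ≤ μ x y)
    {x : V} (hx : x ∈ Ω) (f : V → ℝ) :
    ∑ y, μ x y * f y = ∑ y ∈ Ω, μ x y * f y + ∑ y ∈ bdry μ Ω, μ x y * f y := by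
  rw [← sum_union (disjoint_left.2 fun _ hy => notMem_bdry_of_mem hy)]
  refine (sum_subset (subset_univ _) fun y _ hy => ?_).symm
  have hxy : μ x y = 0 := by
    refine ((hnn x y).eq_or_lt.resolve_right fun hxy => hy ?_).symm
    by_cases hyΩ : y ∈ Ω
    · exact mem_union_left _ hyΩ
    · exact mem_union_right _ (mem_bdry.2 ⟨hyΩ, x, hx, hsym x y ▸ hxy⟩)
  rw [hxy, zero_mul]

lemma IsHarmonic.sum_mul_sub_eq_zero (hnn : ∀ x y, 0 ≤ μ x y) {u : V → ℝ}
    (hu : IsHarmonic μ Ω u) {x : V} (hx : x ∈ Ω) : ∑ y, μ x y * (u x - u y) = 0 := by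
  have hneg : ∑ y, μ x y * (u x - u y) = -∑ y, μ x y * (u y - u x) := by
    rw [← sum_neg_distrib]
    exact sum_congr rfl fun y _ => by ring
  rw [hneg, neg_eq_zero]
  rcases div_eq_zero_iff.1 (hu x hx) with h | h
  · exact h
  -- `m_x = 0` forces every weight at `x` to vanish
  · rw [vm, if_pos hx] at h
    have hzero := (sum_eq_zero_iff_of_nonneg fun y _ => hnn x y).1 h
    exact sum_eq_zero fun y hy => by rw [hzero y hy, zero_mul]

lemma IsHarmonic.neg {u : V → ℝ} (hu : IsHarmonic μ Ω u) : IsHarmonic μ Ω (-u) := by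
  intro x hx
  have h := hu x hx
  simp only [lap, Pi.neg_apply] at h ⊢
  rw [← neg_eq_zero, ← h, ← neg_div, ← sum_neg_distrib]
  exact congrArg (· / vm μ Ω x) (sum_congr rfl fun y _ => by ring)

lemma dirichlet_nonneg (hnn : ∀ x y, 0 ≤ μ x y) (f : V → ℝ) : 0 ≤ dirichlet μ Ω f := by
  have hpos : ∀ s t : Finset V, 0 ≤ ∑ x ∈ s, ∑ y ∈ t, μ x y * (f x - f y) ^ 2 :=
    fun s t => sum_nonneg fun x _ => sum_nonneg fun y _ => mul_nonneg (hnn x y) (sq_nonneg _)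
  have := hpos Ω Ω
  have := hpos Ω (bdry μ Ω)
  unfold dirichlet edgeSum
  positivity

lemma dirichlet_add (f g : V → ℝ) :
    dirichlet μ Ω (f + g) = dirichlet μ Ω f + 2 * dform μ Ω f g + dirichlet μ Ω g := by
  have hexpand : ∀ x y, μ x y * ((f + g) x - (f + g) y) ^ 2 = μ x y * (f x - f y) ^ 2 +
      (2 * (μ x y * ((f x - f y) * (g x - g y))) + μ x y * (g x - g y) ^ 2) := by
    intro x y
    simp only [Pi.add_apply]
    ring
  simp only [dirichlet, dform, edgeSum, hexpand, sum_add_distrib, ← mul_sum]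
  ring

lemma IsHarmonic.dform_eq_zero (hsym : ∀ x y, μ x y = μ y x) (hnn : ∀ x y, 0 ≤ μ x y)
    {u : V → ℝ} (hu : IsHarmonic μ Ω u) {h : V → ℝ} (hh : ∀ z ∈ bdry μ Ω, h z = 0) :
    dform μ Ω u h = 0 := by
  have hswap : ∑ x ∈ Ω, ∑ y ∈ Ω, μ x y * ((u x - u y) * h y) =
      -∑ x ∈ Ω, ∑ y ∈ Ω, μ x y * ((u x - u y) * h x) := by
    rw [sum_comm]
    simp only [← sum_neg_distrib]
    exact sum_congr rfl fun y _ => sum_congr rfl fun x _ => by rw [hsym]; ring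
  have hinner : ∑ x ∈ Ω, ∑ y ∈ Ω, μ x y * ((u x - u y) * (h x - h y)) =
      2 * ∑ x ∈ Ω, ∑ y ∈ Ω, μ x y * ((u x - u y) * h x) := by
    simp only [mul_sub, sum_sub_distrib] at hswap ⊢
    rw [hswap]
    ring
  have hbdry : ∑ x ∈ Ω, ∑ z ∈ bdry μ Ω, μ x z * ((u x - u z) * (h x - h z)) =
      ∑ x ∈ Ω, ∑ z ∈ bdry μ Ω, μ x z * ((u x - u z) * h x) :=
    sum_congr rfl fun x _ => sum_congr rfl fun z hz => by rw [hh z hz, sub_zero]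
  calc dform μ Ω u h
      = ∑ x ∈ Ω, h x * ∑ y, μ x y * (u x - u y) := by
        rw [dform, edgeSum, hinner, hbdry, mul_div_cancel_left₀ _ two_ne_zero,
          ← sum_add_distrib]
        refine sum_congr rfl fun x hx => ?_
        rw [sum_univ_eq_sum_add_sum_bdry hsym hnn hx, mul_add, mul_sum, mul_sum]
        congr 1 <;> exact sum_congr rfl fun y _ => by ring
    _ = 0 := sum_eq_zero fun x hx => by rw [hu.sum_mul_sub_eq_zero hnn hx, mul_zero]

lemma IsHarmonic.dirichlet_le (hsym : ∀ x y, μ x y = μ y x) (hnn : ∀ x y, 0 ≤ μ x y)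
    {u v : V → ℝ} (hu : IsHarmonic μ Ω u) (hv : ∀ z ∈ bdry μ Ω, v z = u z) :
    dirichlet μ Ω u ≤ dirichlet μ Ω v := by
  have hG : dform μ Ω u (v - u) = 0 :=
    hu.dform_eq_zero hsym hnn fun z hz => by rw [Pi.sub_apply, hv z hz, sub_self]
  have hsplit := dirichlet_add (μ := μ) (Ω := Ω) u (v - u)
  rw [add_sub_cancel, hG] at hsplit
  linarith [dirichlet_nonneg (Ω := Ω) hnn (v - u)]

lemma dirichlet_eq_sum_bdry (hsym : ∀ x y, μ x y = μ y x) {f : V → ℝ}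
    (hf : ∀ x ∈ Ω, f x = 0) : dirichlet μ Ω f = ∑ z ∈ bdry μ Ω, f z ^ 2 * vm μ Ω z := by
  have hinner : ∑ x ∈ Ω, ∑ y ∈ Ω, μ x y * (f x - f y) ^ 2 = 0 :=
    sum_eq_zero fun x hx => sum_eq_zero fun y hy => by rw [hf x hx, hf y hy]; ring
  rw [dirichlet, edgeSum, hinner, zero_div, zero_add, sum_comm]
  refine sum_congr rfl fun z hz => ?_
  rw [vm_of_mem_bdry hz, mul_sum]
  exact sum_congr rfl fun x hx => by rw [hf x hx, hsym]; ring

lemma nderiv_sq_mul_vm_le (hnn : ∀ x y, 0 ≤ μ x y) (f : V → ℝ) {z : V} (hz : z ∈ bdry μ Ω) :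
    nderiv μ Ω f z ^ 2 * vm μ Ω z ≤ ∑ x ∈ Ω, μ z x * (f z - f x) ^ 2 := by
  have hm := vm_pos_of_mem_bdry hnn hz
  have hcs : (∑ x ∈ Ω, μ z x * (f z - f x)) ^ 2 ≤
      vm μ Ω z * ∑ x ∈ Ω, μ z x * (f z - f x) ^ 2 := by
    rw [vm_of_mem_bdry hz]
    exact sum_sq_le_sum_mul_sum_of_sq_le_mul Ω (fun x _ => hnn z x)
      (fun x _ => mul_nonneg (hnn z x) (sq_nonneg _)) fun x _ => (by ring : _ = _).le
  rw [nderiv, div_pow, div_mul_eq_mul_div, div_le_iff₀ (by positivity), sq (vm μ Ω z),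
    ← mul_assoc, mul_le_mul_iff_left₀ hm, mul_comm]
  exact hcs

lemma sum_bdry_le_dirichlet (hsym : ∀ x y, μ x y = μ y x) (hnn : ∀ x y, 0 ≤ μ x y)
    (f : V → ℝ) :
    ∑ z ∈ bdry μ Ω, ∑ x ∈ Ω, μ z x * (f z - f x) ^ 2 ≤ dirichlet μ Ω f := by
  have hswap : ∑ z ∈ bdry μ Ω, ∑ x ∈ Ω, μ z x * (f z - f x) ^ 2 =
      ∑ x ∈ Ω, ∑ z ∈ bdry μ Ω, μ x z * (f x - f z) ^ 2 := by
    rw [sum_comm]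
    exact sum_congr rfl fun x _ => sum_congr rfl fun z _ => by rw [hsym]; ring
  have hinner : 0 ≤ ∑ x ∈ Ω, ∑ y ∈ Ω, μ x y * (f x - f y) ^ 2 :=
    sum_nonneg fun x _ => sum_nonneg fun y _ => mul_nonneg (hnn x y) (sq_nonneg _)
  rw [hswap, dirichlet, edgeSum]
  linarith

theorem IsHarmonic.sum_nderiv_sq_le (hsym : ∀ x y, μ x y = μ y x) (hnn : ∀ x y, 0 ≤ μ x y)
    {u : V → ℝ} (hu : IsHarmonic μ Ω u) :
    ∑ z ∈ bdry μ Ω, nderiv μ Ω u z ^ 2 * vm μ Ω z ≤ ∑ z ∈ bdry μ Ω, u z ^ 2 * vm μ Ω z := by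
  set v : V → ℝ := fun x => if x ∈ Ω then 0 else u x
  have hvΩ : ∀ x ∈ Ω, v x = 0 := fun x hx => if_pos hx
  have hvbdry : ∀ z ∈ bdry μ Ω, v z = u z := fun z hz => if_neg (mem_bdry.1 hz).1
  calc ∑ z ∈ bdry μ Ω, nderiv μ Ω u z ^ 2 * vm μ Ω z
      ≤ ∑ z ∈ bdry μ Ω, ∑ x ∈ Ω, μ z x * (u z - u x) ^ 2 :=
        sum_le_sum fun z hz => nderiv_sq_mul_vm_le hnn u hz
    _ ≤ dirichlet μ Ω u := sum_bdry_le_dirichlet hsym hnn u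
    _ ≤ dirichlet μ Ω v := hu.dirichlet_le hsym hnn hvbdry
    _ = ∑ z ∈ bdry μ Ω, v z ^ 2 * vm μ Ω z := dirichlet_eq_sum_bdry hsym hvΩ
    _ = ∑ z ∈ bdry μ Ω, u z ^ 2 * vm μ Ω z :=
        sum_congr rfl fun z hz => by rw [hvbdry z hz]

lemma IsHarmonic.eq_of_forall_le (hnn : ∀ x y, 0 ≤ μ x y) {u : V → ℝ}
    (hu : IsHarmonic μ Ω u) {a : V} (ha : a ∈ Ω) (hmax : ∀ y, 0 < μ a y → u y ≤ u a)
    {y : V} (hy : 0 < μ a y) : u y = u a := by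
  have hterm : ∀ w ∈ univ, 0 ≤ μ a w * (u a - u w) := fun w _ => by
    rcases (hnn a w).eq_or_lt with hw | hw
    · rw [← hw, zero_mul]
    · exact mul_nonneg hw.le (sub_nonneg.2 (hmax w hw))
  have hzero := (sum_eq_zero_iff_of_nonneg hterm).1 (hu.sum_mul_sub_eq_zero hnn ha) y (mem_univ y)
  linarith [(mul_eq_zero.1 hzero).resolve_left hy.ne']

/-- By the mean value property, the maximum `M` spreads along the path from `a` until the path
reaches `δΩ`. -/
lemma IsHarmonic.exists_mem_bdry_eq_of_reflTransGen (hnn : ∀ x y, 0 ≤ μ x y) {u : V → ℝ}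
    (hu : IsHarmonic μ Ω u) {R : Set V} (hR : ∀ a ∈ R, ∀ b, tilAdj μ Ω a b → b ∈ R) {M : ℝ}
    (hle : ∀ y ∈ R, u y ≤ M) {a b : V} (hab : Relation.ReflTransGen (tilAdj μ Ω) a b)
    (hb : b ∈ bdry μ Ω) (ha : a ∈ R) (hua : u a = M) : ∃ c ∈ bdry μ Ω, u c = M := by
  induction hab using Relation.ReflTransGen.head_induction_on with
  | refl => exact ⟨_, hb, hua⟩
  | @head a c hac _ ih =>
    by_cases ha' : a ∈ bdry μ Ω
    · exact ⟨a, ha', hua⟩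
    have haΩ : a ∈ Ω := by
      by_contra haΩ
      exact ha' (mem_bdry.2 ⟨haΩ, c, hac.2.resolve_left haΩ, hac.1⟩)
    have hmax : ∀ y, 0 < μ a y → u y ≤ u a := fun y hy =>
      hua ▸ hle y (hR a ha y ⟨hy, Or.inl haΩ⟩)
    exact ih (hR a ha c hac) ((hu.eq_of_forall_le hnn haΩ hmax hac.1).trans hua)

theorem IsHarmonic.le_of_reflTransGen (hsym : ∀ x y, μ x y = μ y x) (hnn : ∀ x y, 0 ≤ μ x y)
    {u : V → ℝ} (hu : IsHarmonic μ Ω u) {C : ℝ} (hC : ∀ y ∈ bdry μ Ω, u y ≤ C) {z x : V}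
    (hz : z ∈ bdry μ Ω) (hzx : Relation.ReflTransGen (tilAdj μ Ω) z x) : u x ≤ C := by
  have : Std.Symm (tilAdj μ Ω) := ⟨fun _ _ h => ⟨hsym _ _ ▸ h.1, h.2.symm⟩⟩
  obtain ⟨w, hw, hwmax⟩ := (univ.filter (Relation.ReflTransGen (tilAdj μ Ω) z)).exists_max_image
    u ⟨z, mem_filter.2 ⟨mem_univ _, .refl⟩⟩
  simp only [mem_filter, mem_univ, true_and] at hw hwmax
  obtain ⟨c, hc, huc⟩ := hu.exists_mem_bdry_eq_of_reflTransGen hnn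
    (R := {y | Relation.ReflTransGen (tilAdj μ Ω) z y}) (fun _ ha _ hab => ha.tail hab) hwmax
    (Std.Symm.symm _ _ hw) hz hw rfl
  calc u x ≤ u w := hwmax x hzx
    _ = u c := huc.symm
    _ ≤ C := hC c hc

theorem IsHarmonic.abs_le_of_reflTransGen (hsym : ∀ x y, μ x y = μ y x)
    (hnn : ∀ x y, 0 ≤ μ x y) {u : V → ℝ} (hu : IsHarmonic μ Ω u) {C : ℝ}
    (hC : ∀ y ∈ bdry μ Ω, |u y| ≤ C) {z x : V} (hz : z ∈ bdry μ Ω)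
    (hzx : Relation.ReflTransGen (tilAdj μ Ω) z x) : |u x| ≤ C :=
  abs_le.2
    ⟨neg_le.1 (hu.neg.le_of_reflTransGen hsym hnn (fun y hy => neg_le.1 (abs_le.1 (hC y hy)).1)
      hz hzx),
    hu.le_of_reflTransGen hsym hnn (fun y hy => (abs_le.1 (hC y hy)).2) hz hzx⟩

theorem IsHarmonic.abs_nderiv_le (hsym : ∀ x y, μ x y = μ y x) (hnn : ∀ x y, 0 ≤ μ x y)
    {u : V → ℝ} (hu : IsHarmonic μ Ω u) {C : ℝ} (hC : ∀ y ∈ bdry μ Ω, |u y| ≤ C) {z : V}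
    (hz : z ∈ bdry μ Ω) : |nderiv μ Ω u z| ≤ 2 * C := by
  have hm := vm_pos_of_mem_bdry hnn hz
  have hterm : ∀ x ∈ Ω, |μ z x * (u z - u x)| ≤ μ z x * (2 * C) := fun x hx => by
    rcases (hnn z x).eq_or_lt with hzx | hzx
    · rw [← hzx, zero_mul, zero_mul, abs_zero]
    have hux : |u x| ≤ C :=
      hu.abs_le_of_reflTransGen hsym hnn hC hz (.single ⟨hzx, Or.inr hx⟩)
    rw [abs_mul, abs_of_pos hzx]
    exact mul_le_mul_of_nonneg_left (by linarith [abs_sub (u z) (u x), hC z hz]) hzx.le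
  rw [nderiv, abs_div, abs_of_pos hm, div_le_iff₀ hm]
  calc |∑ x ∈ Ω, μ z x * (u z - u x)|
      ≤ ∑ x ∈ Ω, |μ z x * (u z - u x)| := abs_sum_le_sum_abs _ _
    _ ≤ ∑ x ∈ Ω, μ z x * (2 * C) := sum_le_sum hterm
    _ = 2 * C * vm μ Ω z := by rw [← sum_mul, vm_of_mem_bdry hz, mul_comm]

theorem stmt_8_general (μ : V → V → ℝ) (Ω : Finset V)
    (hsym : ∀ x y, μ x y = μ y x) (hnn : ∀ x y, 0 ≤ μ x y) :
    ∀ u : V → ℝ, IsHarmonic μ Ω u →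
      (∑ x ∈ bdry μ Ω, nderiv μ Ω u x ^ 2 * vm μ Ω x) ≤
          (∑ x ∈ bdry μ Ω, u x ^ 2 * vm μ Ω x) ∧
      ∀ C : ℝ, (∀ y ∈ bdry μ Ω, |u y| ≤ C) →
        ∀ x ∈ bdry μ Ω, |nderiv μ Ω u x| ≤ 2 * C :=
  fun _ hu => ⟨hu.sum_nderiv_sq_le hsym hnn, fun _ hC _ hz => hu.abs_nderiv_le hsym hnn hC hz⟩

/-- Proposition 3.1: the DtN operator satisfies ‖Λ‖₂,₂ ≤ 1 and ‖Λ‖∞,∞ ≤ 2. -/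
theorem stmt_8 (μ : V → V → ℝ) (Ω : Finset V)
    (hsym : ∀ x y, μ x y = μ y x) (hnn : ∀ x y, 0 ≤ μ x y)
    (hm : ∀ x ∈ clos μ Ω, 0 < vm μ Ω x) :
    ∀ u : V → ℝ, IsHarmonic μ Ω u →
      (∑ x ∈ bdry μ Ω, nderiv μ Ω u x ^ 2 * vm μ Ω x) ≤
          (∑ x ∈ bdry μ Ω, u x ^ 2 * vm μ Ω x) ∧
      ∀ C : ℝ, (∀ y ∈ bdry μ Ω, |u y| ≤ C) →
        ∀ x ∈ bdry μ Ω, |nderiv μ Ω u x| ≤ 2 * C :=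
  stmt_8_general μ Ω hsym hnn
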